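/- The group algebra R𝔖_m acts faithfully on (R^n)^{⊗m} by place permutation if and only if n ≥ m, for any commutative ring R with 1. -/

import Mathlib

/-!
If `m ≤ n`, an injective multi-index `ι : Fin m → Fin n` separates the permutations: the
coefficient of `τ` in `x` is the `ι`-coordinate of `x` applied to the basis vector `v_{ι ∘ τ}`.
If `n < m`, every multi-index `j` repeats a value, so `j ∘ swap a b = j` for some transposition;
pairing `σ` with `swap a b * σ` shows that the antisymmetrizer `∑ σ, sign σ • σ` acts as zero.
-/

namespace PlacePermutation

variable (R : Type*) [CommRing R] (m n : ℕ)

/-- The `m`-fold tensor power of `V = R^n`, modelled on its basis of multi-indices: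
`(R^n)^{⊗m} ≅ ((Fin m → Fin n) → R)`, the basis vector `v_i` corresponding to the
indicator function of the multi-index `i`. -/
abbrev TensorSpace := (Fin m → Fin n) → R

/-- Place permutation: `σ` sends the basis vector `v_i = v_{i₁} ⊗ ⋯ ⊗ v_{i_m}` to
`v_{i∘σ}` (as a monoid homomorphism to the endomorphisms of tensor space). -/
def placePerm : Equiv.Perm (Fin m) →* Module.End R (TensorSpace R m n) where
  toFun σ := LinearMap.funLeft R R (fun j => j ∘ σ)
  map_one' := by ext x j; rfl
  map_mul' σ τ := by ext x j; rfl

noncomputable def placePermRep :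
    MonoidAlgebra R (Equiv.Perm (Fin m)) →ₐ[R] Module.End R (TensorSpace R m n) :=
  MonoidAlgebra.lift R (Module.End R (TensorSpace R m n)) (Equiv.Perm (Fin m))
    (placePerm R m n)

open Equiv Function

theorem sum_sign_smul_comp_eq_zero_of_not_injective {ι α M : Type*} [Fintype ι] [DecidableEq ι]
    [AddCommGroup M] {j : ι → α} (hj : ¬Injective j) (g : (ι → α) → M) :
    ∑ σ : Perm ι, Perm.sign σ • g (j ∘ σ) = 0 := by
  obtain ⟨a, b, hab, hne⟩ := not_injective_iff.mp hj
  have hswap : j ∘ swap a b = j := funext fun k => apply_swap_eq_self hab k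
  exact Finset.sum_involution (fun σ _ => swap a b * σ)
    (fun σ _ => by simp [← comp_assoc, hswap, Perm.sign_swap hne])
    (fun σ _ _ => (not_congr swap_mul_eq_iff).mpr hne) (fun σ _ => Finset.mem_univ _)
    fun σ _ => swap_mul_involutive a b σ

variable {R m n}

theorem placePermRep_apply (x : MonoidAlgebra R (Perm (Fin m))) (f : TensorSpace R m n)
    (j : Fin m → Fin n) :
    placePermRep R m n x f j = ∑ σ : Perm (Fin m), x.coeff σ * f (j ∘ σ) := by
  rw [placePermRep, MonoidAlgebra.lift_apply, Finsupp.sum_fintype _ _ (by simp)]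
  simp [placePerm, LinearMap.funLeft_apply]

theorem placePermRep_apply_single_comp {ι : Fin m → Fin n} (hι : Injective ι)
    (x : MonoidAlgebra R (Perm (Fin m))) (τ : Perm (Fin m)) :
    placePermRep R m n x (Pi.single (ι ∘ τ) 1) ι = x.coeff τ := by
  rw [placePermRep_apply, Fintype.sum_eq_single τ fun σ hσ => ?_]
  · simp
  · simp [hι.comp_left.eq_iff, DFunLike.coe_fn_eq, hσ]

theorem placePermRep_injective_of_injective {ι : Fin m → Fin n} (hι : Injective ι) :
    Injective (placePermRep R m n) := by
  refine (injective_iff_map_eq_zero _).mpr fun x hx =>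
    MonoidAlgebra.ext <| Finsupp.ext fun τ => ?_
  simpa [hx] using (placePermRep_apply_single_comp hι x τ).symm

variable (R m) in
noncomputable def antisymmetrizer : MonoidAlgebra R (Perm (Fin m)) :=
  .ofCoeff (Finsupp.equivFunOnFinite.symm fun σ => (Perm.sign σ : R))

theorem antisymmetrizer_coeff (σ : Perm (Fin m)) :
    (antisymmetrizer R m).coeff σ = Perm.sign σ :=
  rfl

theorem antisymmetrizer_ne_zero [Nontrivial R] : antisymmetrizer R m ≠ 0 := fun h => by
  simpa [antisymmetrizer_coeff] using congr_arg (fun x => x.coeff 1) h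

theorem placePermRep_antisymmetrizer_eq_zero (h : n < m) :
    placePermRep R m n (antisymmetrizer R m) = 0 := by
  refine LinearMap.ext fun f => funext fun j => ?_
  have hj : ¬Injective j := fun hj => h.not_ge (by simpa using Fintype.card_le_of_injective j hj)
  simpa [placePermRep_apply, antisymmetrizer_coeff, Units.smul_def] using
    sum_sign_smul_comp_eq_zero_of_not_injective hj f

/-- the group algebra `R𝔖_m` acts faithfully on `(R^n)^{⊗m}` by place
permutation if and only if `n ≥ m`. -/
theorem placePermRep_faithful_iff [Nontrivial R] :
    Function.Injective (placePermRep R m n) ↔ m ≤ n := by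
  refine ⟨fun hinj => ?_, fun h => placePermRep_injective_of_injective (Fin.castLE_injective h)⟩
  by_contra! h
  exact antisymmetrizer_ne_zero
    ((injective_iff_map_eq_zero _).mp hinj _ (placePermRep_antisymmetrizer_eq_zero h))

end PlacePermutation
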